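/- Let (Γ,S) be a δ-hyperbolic group. There exists a constant C₁₁ ≥ 0, depending only on Γ, S and δ, such that for every v ∈ Γ of minimal word length in its conjugacy class ⟨v⟩ there exists a map σ_v : ⟨v⟩ → Γ with σ_v(u)·v·σ_v(u)⁻¹ = u and ℓ_S(σ_v(u)) ≤ ½·ℓ_S(u) + C₁₁ for every u ∈ ⟨v⟩. -/
import Mathlib


noncomputable section

/-- Word length with respect to a generating set `S`. -/
def wordLen {Γ : Type} [Group Γ] (S : Set Γ) (g : Γ) : ℕ :=
  sInf {n | ∃ l : List Γ, (∀ x ∈ l, x ∈ S) ∧ l.length = n ∧ l.prod = g}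

/-- The word metric `d_S(g,h) = ℓ_S(g⁻¹h)`. -/
def dS {Γ : Type} [Group Γ] (S : Set Γ) (g h : Γ) : ℕ := wordLen S (g⁻¹ * h)

/-- The Gromov product `(x|y)_w` with respect to the word metric. -/
def gpS {Γ : Type} [Group Γ] (S : Set Γ) (x y w : Γ) : ℝ :=
  ((dS S x w : ℝ) + (dS S y w : ℝ) - (dS S x y : ℝ)) / 2

/-- `(Γ,S)` is a `δ`-hyperbolic group: `S` is a finite symmetric generating set and
the word metric satisfies the four point condition with constant `δ`. -/
def IsHypGroup {Γ : Type} [Group Γ] (S : Set Γ) (δ : ℝ) : Prop :=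
  S.Finite ∧ (∀ s ∈ S, s⁻¹ ∈ S) ∧ Subgroup.closure S = ⊤ ∧
  ∀ x y z w : Γ, min (gpS S x y w) (gpS S y z w) - δ ≤ gpS S x z w

namespace ConjSec

variable {Γ : Type} [Group Γ] (S : Set Γ)

lemma wordLen_le {l : List Γ} (hl : ∀ x ∈ l, x ∈ S) {g : Γ} (hg : l.prod = g) :
    wordLen S g ≤ l.length := Nat.sInf_le ⟨l, hl, rfl, hg⟩

variable {S}

lemma exists_word (hsym : ∀ s ∈ S, s⁻¹ ∈ S) (hgen : Subgroup.closure S = ⊤) (g : Γ) :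
    ∃ l : List Γ, (∀ x ∈ l, x ∈ S) ∧ l.prod = g := by
  have hg : g ∈ Subgroup.closure S := by rw [hgen]; trivial
  induction hg using Subgroup.closure_induction with
  | mem x hx => exact ⟨[x], by simpa using hx, by simp⟩
  | one => exact ⟨[], by simp, by simp⟩
  | mul x y hx hy ihx ihy =>
      obtain ⟨l1, hl1, hp1⟩ := ihx
      obtain ⟨l2, hl2, hp2⟩ := ihy
      refine ⟨l1 ++ l2, ?_, by simp [hp1, hp2]⟩
      intro a ha
      rcases List.mem_append.1 ha with h|h
      exacts [hl1 a h, hl2 a h]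
  | inv x hx ihx =>
      obtain ⟨l, hl, hp⟩ := ihx
      refine ⟨(l.map Inv.inv).reverse, ?_, ?_⟩
      · intro a ha
        simp only [List.mem_reverse, List.mem_map] at ha
        obtain ⟨b, hb, rfl⟩ := ha
        exact hsym b (hl b hb)
      · rw [List.prod_reverse_noncomm]
        simp [hp]

lemma exists_geodesic (hsym : ∀ s ∈ S, s⁻¹ ∈ S) (hgen : Subgroup.closure S = ⊤) (g : Γ) :
    ∃ l : List Γ, (∀ x ∈ l, x ∈ S) ∧ l.length = wordLen S g ∧ l.prod = g := by
  have hne : {n | ∃ l : List Γ, (∀ x ∈ l, x ∈ S) ∧ l.length = n ∧ l.prod = g}.Nonempty := by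
    obtain ⟨l, hl, hp⟩ := exists_word hsym hgen g
    exact ⟨l.length, l, hl, rfl, hp⟩
  exact Nat.sInf_mem hne

lemma wordLen_one : wordLen S (1 : Γ) = 0 :=
  Nat.le_zero.1 (wordLen_le S (l := []) (by simp) (by simp))

lemma wordLen_mul_le (hsym : ∀ s ∈ S, s⁻¹ ∈ S) (hgen : Subgroup.closure S = ⊤) (g h : Γ) :
    wordLen S (g * h) ≤ wordLen S g + wordLen S h := by
  obtain ⟨l1, hl1, hlen1, hp1⟩ := exists_geodesic hsym hgen g
  obtain ⟨l2, hl2, hlen2, hp2⟩ := exists_geodesic hsym hgen h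
  have hmem : ∀ x ∈ l1 ++ l2, x ∈ S := by
    intro a ha
    rcases List.mem_append.1 ha with h'|h'
    exacts [hl1 a h', hl2 a h']
  have := wordLen_le S hmem (g := g * h) (by simp [hp1, hp2])
  simpa [hlen1, hlen2] using this

lemma wordLen_inv_le (hsym : ∀ s ∈ S, s⁻¹ ∈ S) (hgen : Subgroup.closure S = ⊤) (g : Γ) :
    wordLen S g⁻¹ ≤ wordLen S g := by
  obtain ⟨l, hl, hlen, hp⟩ := exists_geodesic hsym hgen g
  have hmem : ∀ x ∈ (l.map Inv.inv).reverse, x ∈ S := by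
    intro a ha
    simp only [List.mem_reverse, List.mem_map] at ha
    obtain ⟨b, hb, rfl⟩ := ha
    exact hsym b (hl b hb)
  have hprod : (l.map Inv.inv).reverse.prod = g⁻¹ := by
    rw [List.prod_reverse_noncomm]; simp [hp]
  have := wordLen_le S hmem hprod
  simpa [hlen] using this

lemma wordLen_inv (hsym : ∀ s ∈ S, s⁻¹ ∈ S) (hgen : Subgroup.closure S = ⊤) (g : Γ) :
    wordLen S g⁻¹ = wordLen S g := by
  refine le_antisymm (wordLen_inv_le hsym hgen g) ?_
  simpa using wordLen_inv_le hsym hgen g⁻¹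

lemma wordLen_eq_zero (hsym : ∀ s ∈ S, s⁻¹ ∈ S) (hgen : Subgroup.closure S = ⊤) {g : Γ}
    (h : wordLen S g = 0) : g = 1 := by
  obtain ⟨l, _, hlen, hp⟩ := exists_geodesic hsym hgen g
  rw [h, List.length_eq_zero_iff] at hlen
  simp [hlen] at hp
  exact hp.symm

end ConjSec


namespace ConjSec

variable {Γ : Type} [Group Γ] {S : Set Γ}

section
variable (S)

lemma dS_eq (g h : Γ) : dS S g h = wordLen S (g⁻¹ * h) := rfl

lemma dS_one_left (g : Γ) : dS S 1 g = wordLen S g := by simp [dS]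

lemma dS_invariant (a x y : Γ) : dS S (a * x) (a * y) = dS S x y := by
  simp [dS, mul_assoc]

end

lemma dS_symm (hsym : ∀ s ∈ S, s⁻¹ ∈ S) (hgen : Subgroup.closure S = ⊤) (x y : Γ) :
    dS S x y = dS S y x := by
  rw [dS, dS, ← wordLen_inv hsym hgen (x⁻¹ * y)]
  simp

lemma dS_triangle (hsym : ∀ s ∈ S, s⁻¹ ∈ S) (hgen : Subgroup.closure S = ⊤) (x y z : Γ) :
    dS S x z ≤ dS S x y + dS S y z := by
  have : x⁻¹ * z = (x⁻¹ * y) * (y⁻¹ * z) := by group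
  rw [dS, this]
  exact wordLen_mul_le hsym hgen _ _

/-- Prefix of a geodesic word: exact lengths. -/
lemma prefix_len (hsym : ∀ s ∈ S, s⁻¹ ∈ S) (hgen : Subgroup.closure S = ⊤)
    {l : List Γ} (hl : ∀ x ∈ l, x ∈ S) {g : Γ} (hp : l.prod = g)
    (hlen : l.length = wordLen S g) (t : ℕ) (ht : t ≤ l.length) :
    wordLen S (l.take t).prod = t ∧ wordLen S (l.drop t).prod = l.length - t := by
  have hmem1 : ∀ x ∈ l.take t, x ∈ S := fun x hx => hl x (List.mem_of_mem_take hx)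
  have hmem2 : ∀ x ∈ l.drop t, x ∈ S := fun x hx => hl x (List.mem_of_mem_drop hx)
  have h1 : wordLen S (l.take t).prod ≤ t := by
    have := wordLen_le S hmem1 (g := (l.take t).prod) rfl
    simpa [List.length_take, Nat.min_eq_left ht] using this
  have h2 : wordLen S (l.drop t).prod ≤ l.length - t := by
    have := wordLen_le S hmem2 (g := (l.drop t).prod) rfl
    simpa [List.length_drop] using this
  have hsplit : (l.take t).prod * (l.drop t).prod = g := by
    rw [← List.prod_append, List.take_append_drop, hp]
  have htri : wordLen S g ≤ wordLen S (l.take t).prod + wordLen S (l.drop t).prod := by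
    rw [← hsplit]; exact wordLen_mul_le hsym hgen _ _
  constructor
  · refine le_antisymm h1 ?_
    omega
  · refine le_antisymm h2 ?_
    omega

end ConjSec

namespace ConjSec

variable {Γ : Type} [Group Γ] {S : Set Γ} {δ : ℝ}

/-- Four-point condition, in distance form with explicit cases. -/
lemma hyp_cases (hhyp : ∀ x y z w : Γ, min (gpS S x y w) (gpS S y z w) - δ ≤ gpS S x z w)
    (x y z w : Γ) :
    (dS S x w : ℝ) + dS S y w - dS S x y - 2*δ ≤ (dS S x w : ℝ) + dS S z w - dS S x z ∨
    (dS S y w : ℝ) + dS S z w - dS S y z - 2*δ ≤ (dS S x w : ℝ) + dS S z w - dS S x z := by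
  have h := hhyp x y z w
  unfold gpS at h
  rcases le_total ((dS S x w : ℝ) + dS S y w - dS S x y) ((dS S y w : ℝ) + dS S z w - dS S y z)
    with h'|h'
  · left
    rw [min_eq_left (by linarith)] at h
    linarith
  · right
    rw [min_eq_right (by linarith)] at h
    linarith

/-- Lemma G: a point on a geodesic from x to z that is close to the projection of w. -/
lemma lemmaG (hδ : 0 ≤ δ) (hsym : ∀ s ∈ S, s⁻¹ ∈ S) (hgen : Subgroup.closure S = ⊤)
    (hhyp : ∀ x y z w : Γ, min (gpS S x y w) (gpS S y z w) - δ ≤ gpS S x z w)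
    (x z w : Γ) {l : List Γ} (hl : ∀ a ∈ l, a ∈ S) (hprod : l.prod = x⁻¹ * z)
    (hlen : l.length = dS S x z) :
    ∃ t ≤ l.length,
      2 * (dS S (x * (l.take t).prod) w : ℝ) ≤
        (dS S x w : ℝ) + dS S z w - dS S x z + 4*δ + 1 := by
  have hwlen : l.length = wordLen S (x⁻¹ * z) := hlen
  set a := dS S x w with ha
  set b := dS S z w with hb
  set c := dS S x z with hc
  have hbac : b ≤ a + c := by
    have e1 := dS_triangle hsym hgen z x w
    have e2 := dS_symm hsym hgen z x
    have e3 := dS_symm hsym hgen z w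
    omega
  have habc : a ≤ b + c := by
    have e1 := dS_triangle hsym hgen x z w
    have e2 := dS_symm hsym hgen z w
    omega
  set t := (a + c - b) / 2 with htdef
  have ht2 : 2 * t ≤ a + c - b := by omega
  have ht2' : a + c - b ≤ 2 * t + 1 := by omega
  have htc : t ≤ c := by omega
  refine ⟨t, by omega, ?_⟩
  set p := x * (l.take t).prod with hp
  have hpre := prefix_len hsym hgen hl hprod hwlen t (by omega)
  have hxinvp : x⁻¹ * p = (l.take t).prod := by rw [hp]; group
  have hxp : dS S x p = t := by rw [dS, hxinvp, hpre.1]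
  have hsplit : (l.take t).prod * (l.drop t).prod = x⁻¹ * z := by
    rw [← List.prod_append, List.take_append_drop, hprod]
  have hpinvz : p⁻¹ * z = (l.drop t).prod := by
    have : (l.take t).prod⁻¹ * (x⁻¹ * z) = (l.drop t).prod := by
      rw [← hsplit]; group
    rw [hp, mul_inv_rev, mul_assoc, this]
  have hpz : dS S p z = c - t := by
    rw [dS, hpinvz, hpre.2, hwlen]
    rfl
  rcases hyp_cases hhyp x p z w with h|h
  · rw [hxp] at h
    have ht2r : (2 * t : ℝ) ≤ (a : ℝ) + c - b := by
      have h' : ((2 * t : ℕ) : ℝ) ≤ ((a + c - b : ℕ) : ℝ) := Nat.cast_le.2 ht2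
      rw [Nat.cast_sub hbac] at h'
      push_cast at h' ⊢
      linarith
    push_cast at h ⊢
    linarith
  · rw [hpz] at h
    have hct : ((c - t : ℕ) : ℝ) = (c : ℝ) - t := by
      rw [Nat.cast_sub htc]
    have ht2r : (a : ℝ) + c - b ≤ 2 * t + 1 := by
      have h' : ((a + c - b : ℕ) : ℝ) ≤ ((2 * t + 1 : ℕ) : ℝ) := Nat.cast_le.2 ht2'
      rw [Nat.cast_sub hbac] at h'
      push_cast at h' ⊢
      linarith
    rw [hct] at h
    push_cast at h ⊢
    linarith

end ConjSec

namespace ConjSec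
open scoped Pointwise

variable {Γ : Type} [Group Γ] {S : Set Γ}

lemma ball_finite (hfin : S.Finite) (hsym : ∀ s ∈ S, s⁻¹ ∈ S)
    (hgen : Subgroup.closure S = ⊤) (n : ℕ) : {g : Γ | wordLen S g ≤ n}.Finite := by
  induction n with
  | zero =>
      refine Set.Finite.subset (Set.finite_singleton 1) ?_
      intro g hg
      simp only [Set.mem_setOf_eq, Nat.le_zero] at hg
      simp [wordLen_eq_zero hsym hgen hg]
  | succ n ih =>
      have hmul : ((insert (1:Γ) S) * {g : Γ | wordLen S g ≤ n}).Finite :=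
        Set.Finite.mul (hfin.insert 1) ih
      refine hmul.subset ?_
      intro g hg
      simp only [Set.mem_setOf_eq] at hg
      obtain ⟨l, hl, hlen, hp⟩ := exists_geodesic hsym hgen g
      cases l with
      | nil =>
          refine ⟨1, by simp, g, ?_, by simp⟩
          simp only [List.prod_nil] at hp
          simp [Set.mem_setOf_eq, ← hp, wordLen_one]
      | cons s lt =>
          refine ⟨s, Set.mem_insert_of_mem _ (hl s (by simp)), lt.prod, ?_, ?_⟩
          · have : wordLen S lt.prod ≤ lt.length :=
              wordLen_le S (fun x hx => hl x (List.mem_cons_of_mem _ hx)) rfl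
            simp only [List.length_cons] at hlen
            simp only [Set.mem_setOf_eq]
            omega
          · simp [← hp]

end ConjSec

namespace ConjSec

variable {Γ : Type} [Group Γ] {S : Set Γ} {δ : ℝ}

lemma wordLen_pow_le (hsym : ∀ s ∈ S, s⁻¹ ∈ S) (hgen : Subgroup.closure S = ⊤) (g : Γ) :
    ∀ n : ℕ, wordLen S (g ^ n) ≤ n * wordLen S g := by
  intro n
  induction n with
  | zero => simp [wordLen_one]
  | succ n ih =>
      rw [pow_succ]
      calc wordLen S (g ^ n * g) ≤ wordLen S (g ^ n) + wordLen S g :=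
            wordLen_mul_le hsym hgen _ _
        _ ≤ (n + 1) * wordLen S g := by nlinarith

lemma conj_pow_eq (v h₀ u : Γ) (hu : h₀ * v * h₀⁻¹ = u) (n : ℕ) :
    u ^ n = h₀ * v ^ n * h₀⁻¹ := by
  induction n with
  | zero => simp
  | succ n ih =>
      rw [pow_succ, ih, ← hu]
      group

/-- Bound on the length of `u²` when `u` is conjugate to `v`. -/
lemma usq_bound (hδ : 0 ≤ δ) (hsym : ∀ s ∈ S, s⁻¹ ∈ S) (hgen : Subgroup.closure S = ⊤)
    (hhyp : ∀ x y z w : Γ, min (gpS S x y w) (gpS S y z w) - δ ≤ gpS S x z w)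
    (v u h₀ : Γ) (hu : h₀ * v * h₀⁻¹ = u) :
    (wordLen S (u * u) : ℝ) ≤ (wordLen S u : ℝ) + wordLen S v + 2*δ := by
  set m := wordLen S u with hm
  set k := wordLen S v with hk
  set A := wordLen S (u * u) with hA
  set L := wordLen S h₀ with hL
  by_contra hcon
  push_neg at hcon
  have hk0 : (0:ℝ) ≤ (k:ℝ) := Nat.cast_nonneg k
  have e1 : ∀ i : ℕ, dS S (u^i) (u^(i+1)) = m := by
    intro i
    have h' : (u^i)⁻¹ * u^(i+1) = u := by rw [pow_succ]; group
    rw [dS, h']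
  have e3 : ∀ i : ℕ, dS S (u^i) 1 = wordLen S (u^i) := by
    intro i
    rw [dS, mul_one, wordLen_inv hsym hgen (u^i)]
  have e4 : ∀ i : ℕ, dS S (u^(i+2)) (u^(i+1)) = m := by
    intro i
    have h' : (u^(i+2))⁻¹ * u^(i+1) = u⁻¹ := by
      have : u^(i+2) = u^(i+1) * u := by rw [pow_succ]
      rw [this]; group
    rw [dS, h', wordLen_inv hsym hgen]
  have e5 : ∀ i : ℕ, dS S (u^i) (u^(i+2)) = A := by
    intro i
    have h2 : u^(i+2) = u^i * (u * u) := by rw [pow_succ, pow_succ, mul_assoc]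
    have h' : (u^i)⁻¹ * u^(i+2) = u * u := by rw [h2, inv_mul_cancel_left]
    rw [dS, h']
  have chain : ∀ i : ℕ, (wordLen S (u^i) : ℝ) + ((A:ℝ) - m - 2*δ) ≤ wordLen S (u^(i+1)) := by
    intro i
    induction i with
    | zero =>
        have hA2m : A ≤ m + m := by
          have := wordLen_mul_le hsym hgen u u
          omega
        have hc : ((A:ℕ):ℝ) ≤ (m:ℝ) + m := by exact_mod_cast hA2m
        simp only [pow_zero, zero_add, pow_one, wordLen_one]
        push_cast
        linarith
    | succ i ih =>
        show (wordLen S (u^(i+1)) : ℝ) + ((A:ℝ) - m - 2*δ) ≤ wordLen S (u^(i+2))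
        rcases hyp_cases hhyp (u^i) 1 (u^(i+2)) (u^(i+1)) with h|h
        · simp only [e1, e3, e4, e5, dS_one_left] at h
          exfalso
          linarith
        · simp only [e1, e3, e4, e5, dS_one_left] at h
          linarith
  have lower : ∀ j : ℕ, (j:ℝ) * ((A:ℝ) - m - 2*δ) ≤ wordLen S (u^j) := by
    intro j
    induction j with
    | zero => simp [wordLen_one]
    | succ j ih =>
        have hc := chain j
        push_cast
        push_cast at ih hc
        nlinarith [hcon, hk0]
  have upper : ∀ j : ℕ, (wordLen S (u^j) : ℝ) ≤ 2*L + j*k := by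
    intro j
    have h2 : wordLen S (v^j) ≤ j * k := by rw [hk]; exact wordLen_pow_le hsym hgen v j
    have h3 : wordLen S h₀⁻¹ = L := by rw [hL]; exact wordLen_inv hsym hgen h₀
    have h1 : wordLen S (u^j) ≤ L + j * k + L := by
      rw [conj_pow_eq v h₀ u hu j]
      have ha := wordLen_mul_le hsym hgen (h₀ * v^j) h₀⁻¹
      have hb := wordLen_mul_le hsym hgen h₀ (v^j)
      omega
    calc (wordLen S (u^j) : ℝ) ≤ ((L + j*k + L : ℕ) : ℝ) := by exact_mod_cast h1
      _ = 2*L + j*k := by push_cast; ring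
  set ε : ℝ := (A:ℝ) - m - 2*δ - k with hε
  have hεpos : 0 < ε := by rw [hε]; linarith
  obtain ⟨j, hj⟩ := exists_nat_gt ((2*(L:ℝ)) / ε)
  have hjε : 2*(L:ℝ) < j * ε := by
    rw [div_lt_iff₀ hεpos] at hj
    linarith
  have hcomb : (j:ℝ) * ((A:ℝ) - m - 2*δ) ≤ 2*L + j*k := le_trans (lower j) (upper j)
  have hexp : (j:ℝ) * ((A:ℝ) - m - 2*δ) = j * ε + j * k := by rw [hε]; ring
  rw [hexp] at hcomb
  linarith
end ConjSec

namespace ConjSec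

variable {Γ : Type} [Group Γ] {S : Set Γ} {δ : ℝ}

/-- Midpoint lemma: the midpoint `P` of a geodesic from `1` to `u` is moved a bounded
amount by `u`, when `u` is conjugate to `v`. -/
lemma midpoint_conj (hδ : 0 ≤ δ) (hsym : ∀ s ∈ S, s⁻¹ ∈ S) (hgen : Subgroup.closure S = ⊤)
    (hhyp : ∀ x y z w : Γ, min (gpS S x y w) (gpS S y z w) - δ ≤ gpS S x z w)
    (v u h₀ : Γ) (hu : h₀ * v * h₀⁻¹ = u) :
    ∃ P : Γ, 2 * (wordLen S P : ℝ) ≤ wordLen S u ∧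
      (wordLen S (P⁻¹ * u * P) : ℝ) ≤ (wordLen S v : ℝ) + 6*δ + 1 := by
  set m := wordLen S u with hm
  set k := wordLen S v with hk
  obtain ⟨l, hl, hlen, hp⟩ := exists_geodesic hsym hgen u
  set t := m / 2 with ht
  have htm : t ≤ m := Nat.div_le_self m 2
  have h2t : 2 * t ≤ m := by omega
  have h2t' : m ≤ 2 * t + 1 := by omega
  set P := (l.take t).prod with hP
  have hpre := prefix_len hsym hgen hl hp (by rw [hlen]) t (by omega)
  have hlP : wordLen S P = t := hpre.1
  have hPu : P⁻¹ * u = (l.drop t).prod := by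
    have hsplit : (l.take t).prod * (l.drop t).prod = u := by
      rw [← List.prod_append, List.take_append_drop, hp]
    rw [hP, ← hsplit, inv_mul_cancel_left]
  have hlPu : wordLen S (P⁻¹ * u) = m - t := by
    rw [hPu, hpre.2, hlen]
  refine ⟨P, ?_, ?_⟩
  · rw [hlP]
    exact_mod_cast h2t
  -- distance computations
  set Z := wordLen S (P⁻¹ * u * P) with hZ
  set B := wordLen S (u * P) with hB
  set A := wordLen S (u * u) with hA
  have f1 : dS S P u = m - t := by rw [dS, hlPu]
  have f2 : dS S 1 u = m := by rw [dS_one_left]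
  have f3 : dS S P 1 = t := by rw [dS, mul_one, wordLen_inv hsym hgen, hlP]
  have f4 : dS S (u*P) u = t := by
    have h' : (u*P)⁻¹ * u = P⁻¹ := by group
    rw [dS, h', wordLen_inv hsym hgen, hlP]
  have f5 : dS S P (u*P) = Z := by
    have h' : P⁻¹ * (u * P) = P⁻¹ * u * P := by rw [mul_assoc]
    rw [dS, h', hZ]
  have f6 : dS S 1 (u*P) = B := by rw [dS_one_left, hB]
  have f7 : dS S (u*u) u = m := by
    have h' : (u*u)⁻¹ * u = u⁻¹ := by group
    rw [dS, h', wordLen_inv hsym hgen]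
  have f8 : dS S 1 (u*u) = A := by rw [dS_one_left, hA]
  have f9 : dS S (u*u) (u*P) = m - t := by
    have h' : (u*u)⁻¹ * (u*P) = (P⁻¹ * u)⁻¹ := by group
    rw [dS, h', wordLen_inv hsym hgen, hlPu]
  have hAbound := usq_bound hδ hsym hgen hhyp v u h₀ hu
  rw [← hm, ← hk, ← hA] at hAbound
  have hmt : ((m - t : ℕ) : ℝ) = (m:ℝ) - t := by
    rw [Nat.cast_sub htm]
  have h2tr : 2 * (t:ℝ) ≤ m := by exact_mod_cast h2t
  have h2tr' : (m:ℝ) ≤ 2 * t + 1 := by exact_mod_cast h2t'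
  have hk0 : (0:ℝ) ≤ k := Nat.cast_nonneg k
  rcases hyp_cases hhyp P 1 (u*P) u with h1|h1
  · rw [f1, f2, f3, f4, f5] at h1
    rw [hmt] at h1
    linarith
  · rw [f1, f2, f6, f4, f5] at h1
    rw [hmt] at h1
    rcases hyp_cases hhyp 1 (u*u) (u*P) u with h2|h2
    · rw [f2, f7, f8, f4, f6] at h2
      linarith
    · rw [f7, f4, f9, f2, f6] at h2
      rw [hmt] at h2
      linarith

end ConjSec

namespace ConjSec

variable {Γ : Type} [Group Γ] {S : Set Γ} {δ : ℝ}

lemma large_case (hδ : 0 ≤ δ) (hsym : ∀ s ∈ S, s⁻¹ ∈ S) (hgen : Subgroup.closure S = ⊤)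
    (hhyp : ∀ x y z w : Γ, min (gpS S x y w) (gpS S y z w) - δ ≤ gpS S x z w)
    (v u h₀ : Γ) (hu : h₀ * v * h₀⁻¹ = u)
    (hmin : ∀ g : Γ, wordLen S v ≤ wordLen S (g * v * g⁻¹))
    (hklarge : 5*δ + 2 ≤ (wordLen S v : ℝ)) :
    ∃ g : Γ, g * v * g⁻¹ = u ∧ (wordLen S g : ℝ) ≤ (wordLen S u : ℝ)/2 + 5*δ + 1 := by
  classical
  obtain ⟨k, hk⟩ : ∃ k, wordLen S v = k := ⟨_, rfl⟩
  obtain ⟨m, hm⟩ : ∃ m, wordLen S u = m := ⟨_, rfl⟩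
  rw [hk] at hklarge hmin
  rw [hm]
  obtain ⟨l, hl, hlen, hp⟩ := exists_geodesic hsym hgen v
  rw [hk] at hlen
  have hDne : {n : ℕ | ∃ (j : ℤ) (i : ℕ), i ≤ k ∧
      wordLen S (u^j * h₀ * (l.take i).prod) = n}.Nonempty := by
    refine ⟨wordLen S h₀, 0, 0, Nat.zero_le k, ?_⟩
    simp
  obtain ⟨d, hd⟩ : ∃ d, sInf {n : ℕ | ∃ (j : ℤ) (i : ℕ), i ≤ k ∧
      wordLen S (u^j * h₀ * (l.take i).prod) = n} = d := ⟨_, rfl⟩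
  obtain ⟨j₀, i₀, hi₀, hq₀⟩ : ∃ (j : ℤ) (i : ℕ), i ≤ k ∧
      wordLen S (u^j * h₀ * (l.take i).prod) = d := by
    have := Nat.sInf_mem hDne
    rw [hd] at this
    exact this
  obtain ⟨h, hh⟩ : ∃ h, u^j₀ * h₀ = h := ⟨_, rfl⟩
  have hcomm : u ^ j₀ * u = u * u ^ j₀ := ((Commute.refl u).zpow_left j₀).eq
  have hconj : h * v * h⁻¹ = u := by
    rw [← hh, mul_inv_rev]
    calc u ^ j₀ * h₀ * v * (h₀⁻¹ * (u ^ j₀)⁻¹)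
        = u ^ j₀ * (h₀ * v * h₀⁻¹) * (u ^ j₀)⁻¹ := by simp [mul_assoc]
      _ = u ^ j₀ * u * (u ^ j₀)⁻¹ := by rw [hu]
      _ = u := by rw [hcomm, mul_inv_cancel_right]
  obtain ⟨c, hc⟩ : ∃ c, (l.take i₀).prod = c := ⟨_, rfl⟩
  obtain ⟨e, he⟩ : ∃ e, (l.drop i₀).prod = e := ⟨_, rfl⟩
  have hce : c * e = v := by rw [← hc, ← he, ← List.prod_append, List.take_append_drop, hp]
  obtain ⟨q, hq⟩ : ∃ q, h * c = q := ⟨_, rfl⟩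
  have hlq : wordLen S q = d := by rw [← hq, ← hh, ← hc]; exact hq₀
  have hmin' : ∀ (j : ℤ) (i : ℕ), i ≤ k → d ≤ wordLen S (u^j * h * (l.take i).prod) := by
    intro j i hi
    have h1 : u^j * h = u^(j + j₀) * h₀ := by rw [← hh, zpow_add]; group
    rw [h1, ← hd]
    exact Nat.sInf_le ⟨j + j₀, i, hi, rfl⟩
  obtain ⟨v', hv'⟩ : ∃ v', c⁻¹ * v * c = v' := ⟨_, rfl⟩
  have hv'ec : v' = e * c := by rw [← hv', ← hce, inv_mul_cancel_left]
  obtain ⟨l', hl'⟩ : ∃ l', l.drop i₀ ++ l.take i₀ = l' := ⟨_, rfl⟩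
  have hl'mem : ∀ x ∈ l', x ∈ S := by
    intro x hx
    rw [← hl'] at hx
    rcases List.mem_append.1 hx with h'|h'
    exacts [hl x (List.mem_of_mem_drop h'), hl x (List.mem_of_mem_take h')]
  have hl'len : l'.length = k := by
    rw [← hl', List.length_append, List.length_drop, List.length_take, hlen]
    omega
  have hl'prod : l'.prod = v' := by
    rw [← hl', List.prod_append, hc, he, hv'ec]
  have hv'k : wordLen S v' = k := by
    refine le_antisymm ?_ ?_
    · have := wordLen_le S hl'mem hl'prod
      omega
    · have h2 := hmin c⁻¹
      rw [inv_inv, hv'] at h2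
      exact h2
  have hqv' : q * v' = u * q := by
    have h1 : h * v = u * h := by rw [← hconj]; group
    rw [← hq, ← hv']
    calc h * c * (c⁻¹ * v * c) = (h * v) * c := by group
      _ = u * (h * c) := by rw [h1]; group
  have hfam : ∀ (j : ℤ) (s : ℕ), s ≤ k → d ≤ wordLen S (u^j * (q * (l'.take s).prod)) := by
    intro j s hs
    have hsplit : (l'.take s).prod
        = ((l.drop i₀).take s).prod * (l.take (s - (k - i₀))).prod := by
      rw [← hl', List.take_append, List.prod_append, List.length_drop, hlen,
        List.take_take, Nat.min_eq_left (show s - (k - i₀) ≤ i₀ by omega)]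
    rcases le_or_gt s (k - i₀) with hcase|hcase
    · have hzero : s - (k - i₀) = 0 := by omega
      have htake : (l.take (i₀ + s)).prod = c * ((l.drop i₀).take s).prod := by
        rw [List.take_add, List.prod_append, hc]
      have heq : u^j * (q * (l'.take s).prod) = u^j * h * (l.take (i₀ + s)).prod := by
        rw [hsplit, hzero, htake, ← hq]
        simp [mul_assoc]
      rw [heq]
      exact hmin' j (i₀ + s) (by omega)
    · have hdrop : (l.drop i₀).take s = l.drop i₀ := by
        apply List.take_of_length_le
        rw [List.length_drop, hlen]
        omega
      have h1 : h * v = u * h := by rw [← hconj]; group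
      have h2 : h * c * (e * (l.take (s - (k - i₀))).prod)
          = h * v * (l.take (s - (k - i₀))).prod := by
        rw [← hce]; group
      have heq : u^j * (q * (l'.take s).prod)
          = u^(j+1) * h * (l.take (s - (k - i₀))).prod := by
        rw [hsplit, hdrop, he, ← hq, zpow_add_one]
        simp only [mul_assoc]
        congr 1
        rw [← mul_assoc, h2, h1, mul_assoc]
      rw [heq]
      exact hmin' (j+1) (s - (k - i₀)) (by omega)
  have hdqq : dS S q (u*q) = k := by
    have h1 : q⁻¹ * (u * q) = v' := by rw [← hqv']; group
    rw [dS, h1, hv'k]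
  have hduq : dS S (u⁻¹ * q) q = k := by
    have h1 : q⁻¹ * (u * q) = v' := by rw [← hqv']; group
    have h2 : (u⁻¹ * q)⁻¹ * q = v' := by rw [← h1]; group
    rw [dS, h2, hv'k]
  obtain ⟨β, hβ⟩ : ∃ b, wordLen S (u * q) = b := ⟨_, rfl⟩
  obtain ⟨γ, hγ⟩ : ∃ b, wordLen S (u⁻¹ * q) = b := ⟨_, rfl⟩
  have hβd : (β : ℝ) ≥ d + k - 4*δ - 1 := by
    obtain ⟨t, htk, hG⟩ := lemmaG hδ hsym hgen hhyp q (u*q) 1 hl'mem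
      (by rw [hl'prod, ← hqv']; group) (by rw [hl'len, hdqq])
    rw [hl'len] at htk
    have hpt : d ≤ dS S (q * (l'.take t).prod) 1 := by
      rw [dS, mul_one, wordLen_inv hsym hgen]
      have h2 := hfam 0 t htk
      simpa using h2
    have hq1 : dS S q 1 = d := by rw [dS, mul_one, wordLen_inv hsym hgen, hlq]
    have huq1 : dS S (u*q) 1 = β := by rw [dS, mul_one, wordLen_inv hsym hgen, hβ]
    rw [hq1, huq1, hdqq] at hG
    have hptr : (d:ℝ) ≤ dS S (q * (l'.take t).prod) 1 := by exact_mod_cast hpt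
    linarith
  have hγd : (γ : ℝ) ≥ d + k - 4*δ - 1 := by
    obtain ⟨t, htk, hG⟩ := lemmaG hδ hsym hgen hhyp (u⁻¹*q) q 1 hl'mem
      (by rw [hl'prod]
          have h1 : q⁻¹ * (u * q) = v' := by rw [← hqv']; group
          rw [← h1]; group)
      (by rw [hl'len, hduq])
    rw [hl'len] at htk
    have hpt : d ≤ dS S ((u⁻¹*q) * (l'.take t).prod) 1 := by
      rw [dS, mul_one, wordLen_inv hsym hgen]
      have h2 := hfam (-1) t htk
      have heq : u^(-1:ℤ) * (q * (l'.take t).prod) = (u⁻¹*q) * (l'.take t).prod := by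
        rw [zpow_neg_one]; group
      rw [heq] at h2
      exact h2
    have hq1 : dS S q 1 = d := by rw [dS, mul_one, wordLen_inv hsym hgen, hlq]
    have huq1 : dS S (u⁻¹*q) 1 = γ := by rw [dS, mul_one, wordLen_inv hsym hgen, hγ]
    rw [hq1, huq1, hduq] at hG
    have hptr : (d:ℝ) ≤ dS S ((u⁻¹*q) * (l'.take t).prod) 1 := by exact_mod_cast hpt
    linarith
  have hgood : 2*(d:ℝ) ≤ m - k + 10*δ + 2 := by
    have g1 : dS S q 1 = d := by rw [dS, mul_one, wordLen_inv hsym hgen, hlq]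
    have g2 : dS S (u*q) 1 = β := by rw [dS, mul_one, wordLen_inv hsym hgen, hβ]
    have g3 : dS S u 1 = m := by rw [dS, mul_one, wordLen_inv hsym hgen, hm]
    have g4 : dS S q u = γ := by
      have h1 : q⁻¹ * u = (u⁻¹ * q)⁻¹ := by group
      rw [dS, h1, wordLen_inv hsym hgen, hγ]
    have g5 : dS S (u*q) u = d := by
      have h1 : (u*q)⁻¹ * u = q⁻¹ := by group
      rw [dS, h1, wordLen_inv hsym hgen, hlq]
    rcases hyp_cases hhyp q (u*q) u 1 with h'|h'
    · simp only [g1, g2, g3, g4, g5, hdqq] at h'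
      linarith
    · simp only [g1, g2, g3, g4, g5, hdqq] at h'
      linarith
  have hlc : wordLen S c ≤ i₀ := by
    have h1 := wordLen_le S (l := l.take i₀) (fun x hx => hl x (List.mem_of_mem_take hx)) hc
    rw [List.length_take] at h1
    exact le_trans h1 (min_le_left _ _)
  have hle : wordLen S e ≤ k - i₀ := by
    have h1 := wordLen_le S (l := l.drop i₀) (fun x hx => hl x (List.mem_of_mem_drop hx)) he
    rw [List.length_drop, hlen] at h1
    exact h1
  rcases le_or_gt (2*i₀) k with hrot|hrot
  · refine ⟨h, hconj, ?_⟩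
    have hhq : h = q * c⁻¹ := by rw [← hq]; group
    have hlh : wordLen S h ≤ d + i₀ := by
      rw [hhq]
      calc wordLen S (q * c⁻¹) ≤ wordLen S q + wordLen S c⁻¹ := wordLen_mul_le hsym hgen _ _
        _ ≤ d + i₀ := by
            have h2 := wordLen_inv hsym hgen c
            omega
    have h3 : (wordLen S h : ℝ) ≤ (d:ℝ) + i₀ := by exact_mod_cast hlh
    have hi₀r : 2*(i₀:ℝ) ≤ k := by exact_mod_cast hrot
    linarith
  · refine ⟨h * v, by rw [← hconj]; group, ?_⟩
    have hhv : h * v = q * e := by rw [← hq, ← hce]; group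
    have hlh : wordLen S (h*v) ≤ d + (k - i₀) := by
      rw [hhv]
      calc wordLen S (q * e) ≤ wordLen S q + wordLen S e := wordLen_mul_le hsym hgen _ _
        _ ≤ d + (k - i₀) := by omega
    have h1 : (wordLen S (h*v) : ℝ) ≤ (d:ℝ) + ((k - i₀ : ℕ) : ℝ) := by exact_mod_cast hlh
    have h2 : ((k - i₀ : ℕ) : ℝ) = (k:ℝ) - i₀ := by rw [Nat.cast_sub (by omega)]
    have hi₀r : (k:ℝ) < 2*(i₀:ℝ) := by exact_mod_cast hrot
    rw [h2] at h1
    linarith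

end ConjSec

open ConjSec

/-- in a δ-hyperbolic group, for every element `v` of minimal word length
in its conjugacy class there is a section `σ_v` of `g ↦ gvg⁻¹` over the conjugacy
class with `ℓ_S(σ_v(u)) ≤ ½ℓ_S(u) + C₁₁`, where `C₁₁` depends only on `Γ, S, δ`. -/
theorem conjugation_section_exists {Γ : Type} [Group Γ] (S : Set Γ) (δ : ℝ)
    (hδ : 0 ≤ δ) (hS : IsHypGroup S δ) :
    ∃ C₁₁ : ℝ, 0 ≤ C₁₁ ∧
      ∀ v : Γ, (∀ g : Γ, wordLen S v ≤ wordLen S (g * v * g⁻¹)) →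
        ∃ σ : Γ → Γ, ∀ u : Γ, (∃ g : Γ, g * v * g⁻¹ = u) →
          σ u * v * (σ u)⁻¹ = u ∧
          (wordLen S (σ u) : ℝ) ≤ (wordLen S u : ℝ) / 2 + C₁₁ := by
  classical
  obtain ⟨hfin, hsym, hgen, hhyp⟩ := hS
  set Rn : ℕ := ⌈11*δ + 3⌉₊ with hRn
  have hball : {g : Γ | wordLen S g ≤ Rn}.Finite := ball_finite hfin hsym hgen Rn
  set cc : Γ → Γ → Γ := fun a b => if h : ∃ g : Γ, g * a * g⁻¹ = b then h.choose else 1 with hcc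
  have hccspec : ∀ a b : Γ, (∃ g : Γ, g * a * g⁻¹ = b) → (cc a b) * a * (cc a b)⁻¹ = b := by
    intro a b hab
    rw [hcc]
    simp only [dif_pos hab]
    exact hab.choose_spec
  have hT : ((fun p : Γ × Γ => wordLen S (cc p.1 p.2)) ''
      ({g : Γ | wordLen S g ≤ Rn} ×ˢ {g : Γ | wordLen S g ≤ Rn})).Finite :=
    Set.Finite.image _ (hball.prod hball)
  obtain ⟨N, hN⟩ : ∃ N : ℕ, ∀ n ∈ (fun p : Γ × Γ => wordLen S (cc p.1 p.2)) ''
      ({g : Γ | wordLen S g ≤ Rn} ×ˢ {g : Γ | wordLen S g ≤ Rn}), n ≤ N := by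
    rcases hT.bddAbove with ⟨N, hN⟩
    exact ⟨N, fun n hn => hN hn⟩
  refine ⟨max (5*δ + 1) (N:ℝ), ?_, ?_⟩
  · have : (0:ℝ) ≤ 5*δ + 1 := by linarith
    exact le_trans this (le_max_left _ _)
  intro v hmin
  have main : ∀ u : Γ, (∃ g : Γ, g * v * g⁻¹ = u) →
      ∃ g : Γ, g * v * g⁻¹ = u ∧
        (wordLen S g : ℝ) ≤ (wordLen S u : ℝ)/2 + max (5*δ + 1) (N:ℝ) := by
    intro u hu
    obtain ⟨h₀, hu⟩ := hu
    rcases le_or_gt (5*δ + 2) ((wordLen S v : ℕ) : ℝ) with hlarge|hsmall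
    · obtain ⟨g, hg, hgb⟩ := large_case hδ hsym hgen hhyp v u h₀ hu hmin hlarge
      refine ⟨g, hg, le_trans hgb ?_⟩
      have := le_max_left (5*δ + 1) (N:ℝ)
      linarith
    · obtain ⟨P, hPb, hPZ⟩ := midpoint_conj hδ hsym hgen hhyp v u h₀ hu
      have hex : ∃ g : Γ, g * v * g⁻¹ = P⁻¹ * u * P := by
        refine ⟨P⁻¹ * h₀, ?_⟩
        rw [← hu]
        group
      have hvRn : wordLen S v ≤ Rn := by
        have h1 : ((wordLen S v : ℕ) : ℝ) ≤ (Rn : ℝ) := by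
          have h2 : (11*δ + 3 : ℝ) ≤ Rn := by
            rw [hRn]; exact Nat.le_ceil _
          linarith
        exact_mod_cast h1
      have hu'Rn : wordLen S (P⁻¹ * u * P) ≤ Rn := by
        have h1 : ((wordLen S (P⁻¹ * u * P) : ℕ) : ℝ) ≤ (Rn : ℝ) := by
          have h2 : (11*δ + 3 : ℝ) ≤ Rn := by
            rw [hRn]; exact Nat.le_ceil _
          linarith
        exact_mod_cast h1
      have hmem : wordLen S (cc v (P⁻¹ * u * P)) ≤ N :=
        hN _ ⟨(v, P⁻¹ * u * P), ⟨hvRn, hu'Rn⟩, rfl⟩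
      refine ⟨P * cc v (P⁻¹ * u * P), ?_, ?_⟩
      · have hs := hccspec v (P⁻¹ * u * P) hex
        calc P * cc v (P⁻¹ * u * P) * v * (P * cc v (P⁻¹ * u * P))⁻¹
            = P * (cc v (P⁻¹ * u * P) * v * (cc v (P⁻¹ * u * P))⁻¹) * P⁻¹ := by group
          _ = P * (P⁻¹ * u * P) * P⁻¹ := by rw [hs]
          _ = u := by group
      · have hmul := wordLen_mul_le hsym hgen P (cc v (P⁻¹ * u * P))
        have h1 : (wordLen S (P * cc v (P⁻¹ * u * P)) : ℝ)
            ≤ (wordLen S P : ℝ) + wordLen S (cc v (P⁻¹ * u * P)) := by exact_mod_cast hmul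
        have h2 : (wordLen S (cc v (P⁻¹ * u * P)) : ℝ) ≤ (N:ℝ) := by exact_mod_cast hmem
        have h3 := le_max_right (5*δ + 1) (N:ℝ)
        linarith
  refine ⟨fun u => if h : ∃ g : Γ, g * v * g⁻¹ = u ∧
      (wordLen S g : ℝ) ≤ (wordLen S u : ℝ)/2 + max (5*δ + 1) (N:ℝ) then h.choose else 1, ?_⟩
  intro u hu
  obtain ⟨g, hg1, hg2⟩ := main u hu
  have hex : ∃ g : Γ, g * v * g⁻¹ = u ∧
      (wordLen S g : ℝ) ≤ (wordLen S u : ℝ)/2 + max (5*δ + 1) (N:ℝ) := ⟨g, hg1, hg2⟩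
  simp only [dif_pos hex]
  exact ⟨hex.choose_spec.1, hex.choose_spec.2⟩
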